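/- arXiv:2104.12107 — 6 statements merged into one kernel-verified Lean document; each statement's English description precedes it below -/
import Mathlib

section
/- Let n ≥ 1 and let P be an n×n real left-stochastic matrix that is irreducible. Then for every M > 0 there exists a vector ρ^∞ ∈ ℝ^n with strictly positive entries such that P ρ^∞ = ρ^∞ and ∑_i ρ^∞_i = M, and this vector is unique among nonnegative vectors: if ρ ∈ ℝ^n has nonnegative entries, P ρ = ρ and ∑_i ρ_i = M, then ρ = ρ^∞. -/
open Finset

namespace Matrix

variable {ι R : Type*} [Fintype ι] [DecidableEq ι] {P : Matrix ι ι R} {u v : ι → R}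

lemma pow_mulVec_eq_self [Semiring R] (hv : P *ᵥ v = v) (k : ℕ) : (P ^ k) *ᵥ v = v := by
  induction k with
  | zero => exact one_mulVec v
  | succ k ih => rw [pow_succ, ← mulVec_mulVec, hv, ih]

lemma IsIrreducible.pos_of_mulVec_eq_self [Ring R] [LinearOrder R] [IsStrictOrderedRing R]
    (hP : P.IsIrreducible) (hv0 : 0 ≤ v) (hv : P *ᵥ v = v) (hne : v ≠ 0) (i : ι) :
    0 < v i := by
  obtain ⟨j, hj⟩ : ∃ j, v j ≠ 0 := Function.ne_iff.1 hne
  obtain ⟨k, -, hk⟩ := (isIrreducible_iff_exists_pow_pos hP.nonneg).1 hP i j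
  rw [← pow_mulVec_eq_self hv k]
  exact sum_pos' (fun l _ => mul_nonneg (pow_apply_nonneg hP.nonneg k i l) (hv0 l))
    ⟨j, mem_univ j, mul_pos hk ((hv0 j).lt_of_ne' hj)⟩

section OrderedField

variable [Field R] [LinearOrder R] [IsStrictOrderedRing R]

/-- The all-ones row vector is a left eigenvector of `P` for the eigenvalue `1`, so `P - 1` is
singular. -/
lemma exists_mulVec_eq_self_of_mem_colStochastic [Nonempty ι] (hP : P ∈ colStochastic R ι) :
    ∃ v ≠ 0, P *ᵥ v = v := by
  have hdet : (P - 1).det = 0 := by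
    refine exists_vecMul_eq_zero_iff.1 ⟨1, one_ne_zero, ?_⟩
    rw [vecMul_sub, vecMul_one, one_vecMul_of_mem_colStochastic hP, sub_self]
  obtain ⟨v, hv0, hv⟩ := exists_mulVec_eq_zero_iff.2 hdet
  exact ⟨v, hv0, by rwa [sub_mulVec, one_mulVec, sub_eq_zero] at hv⟩

/-- The triangle inequality gives `|v| ≤ P *ᵥ |v|`, and both sides have the same sum. -/
lemma mulVec_abs_eq_abs_of_mem_colStochastic (hP : P ∈ colStochastic R ι)
    (hv : P *ᵥ v = v) : P *ᵥ |v| = |v| := by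
  have hle : ∀ i, |v| i ≤ (P *ᵥ |v|) i := fun i => calc
    |v| i = |∑ j, P i j * v j| := congrArg abs (congrFun hv i).symm
    _ ≤ ∑ j, |P i j * v j| := abs_sum_le_sum_abs _ _
    _ = (P *ᵥ |v|) i := by
      simp only [abs_mul, abs_of_nonneg (nonneg_of_mem_colStochastic hP), mulVec, dotProduct,
        Pi.abs_apply]
  have hsum := sum_mulVec_of_mem_colStochastic (x := |v|) hP
  funext i
  exact ((sum_eq_sum_iff_of_le fun i _ => hle i).1 hsum.symm i (mem_univ i)).symm

/-- Subtracting from `v` the largest multiple of `u` below it leaves a nonnegative stationary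
vector with a zero entry, which must vanish by irreducibility. -/
lemma IsIrreducible.eq_smul_of_mulVec_eq_self [Nonempty ι] (hP : P.IsIrreducible)
    (hu : ∀ i, 0 < u i) (hPu : P *ᵥ u = u) (hPv : P *ᵥ v = v) : ∃ t : R, v = t • u := by
  obtain ⟨i₀, -, hi₀⟩ := exists_min_image univ (fun i => v i / u i) univ_nonempty
  set t := v i₀ / u i₀
  have hw0 : 0 ≤ v - t • u := fun i => by
    have := mul_le_mul_of_nonneg_right (hi₀ i (mem_univ i)) (hu i).le
    rw [div_mul_cancel₀ _ (hu i).ne'] at this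
    simpa using this
  have hPw : P *ᵥ (v - t • u) = v - t • u := by rw [mulVec_sub, mulVec_smul, hPu, hPv]
  have hwi₀ : (v - t • u) i₀ = 0 := by simp [t, div_mul_cancel₀ _ (hu i₀).ne']
  by_contra! hne
  have hw : v - t • u ≠ 0 := fun h => hne t (sub_eq_zero.1 h)
  exact (hP.pos_of_mulVec_eq_self hw0 hPw hw i₀).ne' hwi₀

lemma IsIrreducible.eq_of_mulVec_eq_self_of_sum_eq [Nonempty ι] (hP : P.IsIrreducible)
    (hu : ∀ i, 0 < u i) (hPu : P *ᵥ u = u) (hPv : P *ᵥ v = v)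
    (hsum : ∑ i, v i = ∑ i, u i) : v = u := by
  obtain ⟨t, rfl⟩ := hP.eq_smul_of_mulVec_eq_self hu hPu hPv
  have hS : ∑ i, u i ≠ 0 := (sum_pos (fun i _ => hu i) univ_nonempty).ne'
  have ht : t = 1 := by simpa [← mul_sum, hS] using hsum
  rw [ht, one_smul]

end OrderedField

end Matrix

open Matrix in
/-- An irreducible left-stochastic matrix has, for every total mass `M > 0`,
a unique nonnegative stationary vector, and it has strictly positive entries. -/
theorem perron_frobenius_stationary_vector
    (n : ℕ) (hn : 1 ≤ n) (P : Matrix (Fin n) (Fin n) ℝ)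
    (hP0 : ∀ i j, 0 ≤ P i j) (hP1 : ∀ j, ∑ i, P i j = 1)
    (hirr : ∀ i j, ∃ k : ℕ, 1 ≤ k ∧ 0 < (P ^ k) i j)
    (M : ℝ) (hM : 0 < M) :
    ∃ ρinf : Fin n → ℝ, (∀ i, 0 < ρinf i) ∧ P.mulVec ρinf = ρinf ∧ (∑ i, ρinf i) = M ∧
      ∀ ρ : Fin n → ℝ, (∀ i, 0 ≤ ρ i) → P.mulVec ρ = ρ → (∑ i, ρ i) = M → ρ = ρinf := by
  have : Nonempty (Fin n) := ⟨⟨0, hn⟩⟩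
  have hPs : P ∈ colStochastic ℝ (Fin n) := mem_colStochastic_iff_sum.2 ⟨hP0, hP1⟩
  have hPirr : P.IsIrreducible := (isIrreducible_iff_exists_pow_pos hP0).2 hirr
  obtain ⟨v, hv0, hv⟩ := exists_mulVec_eq_self_of_mem_colStochastic hPs
  have hPv := mulVec_abs_eq_abs_of_mem_colStochastic hPs hv
  have hpos := hPirr.pos_of_mulVec_eq_self (abs_nonneg v) hPv (mt (Pi.abs_eq_zero v).1 hv0)
  have hS : 0 < ∑ i, |v| i := sum_pos (fun i _ => hpos i) univ_nonempty
  set ρinf := (M / ∑ i, |v| i) • |v|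
  have hρinf_pos : ∀ i, 0 < ρinf i := fun i => mul_pos (div_pos hM hS) (hpos i)
  have hPρinf : P *ᵥ ρinf = ρinf := by rw [mulVec_smul, hPv]
  have hρinf : ∑ i, ρinf i = M := by
    simp only [ρinf, Pi.smul_apply, smul_eq_mul, ← mul_sum]
    exact div_mul_cancel₀ M hS.ne'
  refine ⟨ρinf, hρinf_pos, hPρinf, hρinf, fun ρ _ hPρ hρ => ?_⟩
  exact hPirr.eq_of_mulVec_eq_self_of_sum_eq hρinf_pos hPρinf hPρ (hρ.trans hρinf.symm)
end

section
/- Let n ≥ 1, let P be an n×n real left-stochastic irreducible matrix, χ > 0 and M > 0, and let ρ^∞ ∈ ℝ^n be the unique nonnegative vector with P ρ^∞ = ρ^∞ and ∑_i ρ^∞_i = M. Then ρ^∞ is a globally attractive equilibrium among admissible data: every differentiable solution ρ : ℝ → ℝ^n of ρ'(t) = χ(P − I)ρ(t) whose initial datum ρ(0) has nonnegative entries and satisfies ∑_i ρ_i(0) = M converges to ρ^∞ as t → +∞, i.e. ρ_i(t) → ρ^∞_i for every i. -/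
/-!
With `A = χ (P - 1)` every solution is `ρ t = exp (t A) ρ 0`, and `ρ∞` is fixed by this flow since
`A ρ∞ = 0`. As `exp (s (P - 1)) = e⁻ˢ exp (s P)`, the flow is column-stochastic for `t ≥ 0`, and
irreducibility makes `exp A` entrywise positive. A column-stochastic matrix with entries `≥ δ`
contracts the `ℓ¹` norm of zero-sum vectors by the factor `1 - n δ`, so the zero-sum vector
`ρ t - ρ∞ = exp (t A) (ρ 0 - ρ∞)` decays geometrically.
-/

open Finset Filter
open Matrix NormedSpace Topology
open scoped Nat

-- any norm will do: `exp` on matrices depends only on the topology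
attribute [local instance] Matrix.linftyOpNormedAddCommGroup Matrix.linftyOpNormedRing
  Matrix.linftyOpNormedAlgebra

namespace Matrix

variable {ι : Type*} [Fintype ι]

theorem sum_abs_mulVec_le_of_le_apply {E : Matrix ι ι ℝ} {δ : ℝ} (hE : ∀ i j, δ ≤ E i j)
    (hcol : ∀ j, ∑ i, E i j = 1) {w : ι → ℝ} (hw : ∑ j, w j = 0) :
    ∑ i, |(E *ᵥ w) i| ≤ (1 - Fintype.card ι * δ) * ∑ j, |w j| := by
  -- as `∑ w = 0`, subtracting `δ` from every entry of `E` does not change `E *ᵥ w`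
  have hshift : ∀ i, (E *ᵥ w) i = ∑ j, (E i j - δ) * w j := fun i => by
    simp only [mulVec, dotProduct, sub_mul, sum_sub_distrib, ← mul_sum, hw, mul_zero, sub_zero]
  calc ∑ i, |(E *ᵥ w) i| ≤ ∑ i, ∑ j, (E i j - δ) * |w j| := by
        refine sum_le_sum fun i _ => ?_
        rw [hshift]
        refine (abs_sum_le_sum_abs _ _).trans_eq (sum_congr rfl fun j _ => ?_)
        rw [abs_mul, abs_of_nonneg (sub_nonneg.2 (hE i j))]
    _ = (1 - Fintype.card ι * δ) * ∑ j, |w j| := by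
        rw [sum_comm, mul_sum]
        refine sum_congr rfl fun j _ => ?_
        rw [← sum_mul, sum_sub_distrib, hcol j, sum_const, Finset.card_univ, nsmul_eq_mul]

theorem exists_sum_abs_mulVec_le [Nonempty ι] {E : Matrix ι ι ℝ} (hE : ∀ i j, 0 < E i j)
    (hcol : ∀ j, ∑ i, E i j = 1) :
    ∃ c, 0 ≤ c ∧ c < 1 ∧ ∀ w : ι → ℝ, ∑ j, w j = 0 → ∑ i, |(E *ᵥ w) i| ≤ c * ∑ j, |w j| := by
  obtain ⟨p, hp⟩ := Finite.exists_min (α := ι × ι) fun p => E p.1 p.2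
  obtain ⟨j⟩ := ‹Nonempty ι›
  have hδ : ∀ i j, E p.1 p.2 ≤ E i j := fun i j => hp (i, j)
  have hcard : Fintype.card ι * E p.1 p.2 ≤ 1 := by
    simpa [hcol j] using sum_le_sum fun i (_ : i ∈ univ) => hδ i j
  refine ⟨_, by linarith, ?_, fun w hw => sum_abs_mulVec_le_of_le_apply hδ hcol hw⟩
  have := mul_pos (Nat.cast_pos.2 (Fintype.card_pos (α := ι))) (hE p.1 p.2)
  linarith

variable [DecidableEq ι]

theorem sum_abs_mulVec_le {E : Matrix ι ι ℝ} (hE : E ∈ colStochastic ℝ ι) {w : ι → ℝ}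
    (hw : ∑ j, w j = 0) : ∑ i, |(E *ᵥ w) i| ≤ ∑ j, |w j| := by
  simpa using sum_abs_mulVec_le_of_le_apply (δ := 0) hE.1 (sum_col_of_mem_colStochastic hE) hw

theorem hasDerivAt_exp_smul_mulVec (A : Matrix ι ι ℝ) (v : ι → ℝ) (t : ℝ) :
    HasDerivAt (fun s : ℝ => exp (s • A) *ᵥ v) (A *ᵥ (exp (t • A) *ᵥ v)) t := by
  let L : Matrix ι ι ℝ →L[ℝ] ι → ℝ :=
    LinearMap.toContinuousLinearMap ((mulVecBilin ℝ ℝ).flip v)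
  rw [mulVec_mulVec]
  exact L.hasFDerivAt.comp_hasDerivAt t (hasDerivAt_exp_smul_const' A t)

theorem eq_exp_smul_mulVec_of_hasDerivAt {A : Matrix ι ι ℝ} {x : ℝ → ι → ℝ}
    (hx : ∀ t, HasDerivAt x (A *ᵥ x t) t) (t : ℝ) : x t = exp (t • A) *ᵥ x 0 := by
  let L : (ι → ℝ) →L[ℝ] ι → ℝ := LinearMap.toContinuousLinearMap (mulVecLin A)
  refine congrFun (ODE_solution_unique_univ (v := fun _ => L) (s := fun _ => Set.univ)
    (fun _ => L.lipschitz.lipschitzOnWith) (fun t => ⟨hx t, Set.mem_univ _⟩)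
    (fun t => ⟨hasDerivAt_exp_smul_mulVec A (x 0) t, Set.mem_univ _⟩) (t₀ := 0) (by simp)) t

theorem exp_smul_mulVec_of_mulVec_eq_zero {A : Matrix ι ι ℝ} {v : ι → ℝ} (hv : A *ᵥ v = 0)
    (t : ℝ) : exp (t • A) *ᵥ v = v :=
  (eq_exp_smul_mulVec_of_hasDerivAt (x := fun _ => v)
    (fun _ => by simpa [hv] using hasDerivAt_const _ v) t).symm

theorem one_vecMul_exp_smul {A : Matrix ι ι ℝ} (hA : 1 ᵥ* A = 0) (t : ℝ) :
    1 ᵥ* exp (t • A) = 1 := by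
  rw [← mulVec_transpose, ← exp_transpose, transpose_smul]
  exact exp_smul_mulVec_of_mulVec_eq_zero (by rw [mulVec_transpose, hA]) t

theorem hasSum_exp_apply (N : Matrix ι ι ℝ) (i j : ι) :
    HasSum (fun k => (k ! : ℝ)⁻¹ * (N ^ k) i j) (exp N i j) := by
  have h := Pi.hasSum.1 (Pi.hasSum.1 (exp_series_hasSum_exp' (𝕂 := ℝ) N) i) j
  simp only [Matrix.smul_apply, smul_eq_mul] at h
  exact h

theorem exp_apply_nonneg {N : Matrix ι ι ℝ} (hN : ∀ i j, 0 ≤ N i j) (i j : ι) :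
    0 ≤ exp N i j :=
  (hasSum_exp_apply N i j).nonneg fun k => mul_nonneg (by positivity) (pow_apply_nonneg hN k i j)

theorem inv_factorial_mul_pow_apply_le_exp_apply {N : Matrix ι ι ℝ} (hN : ∀ i j, 0 ≤ N i j)
    (k : ℕ) (i j : ι) : (k ! : ℝ)⁻¹ * (N ^ k) i j ≤ exp N i j :=
  le_hasSum (hasSum_exp_apply N i j) k fun l _ =>
    mul_nonneg (by positivity) (pow_apply_nonneg hN l i j)

theorem exp_smul_sub_one (N : Matrix ι ι ℝ) (s : ℝ) :
    exp (s • (N - 1)) = Real.exp (-s) • exp (s • N) := by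
  have hsplit : s • (N - 1) = s • N + algebraMap ℝ (Matrix ι ι ℝ) (-s) := by
    rw [Algebra.algebraMap_eq_smul_one, smul_sub]; module
  rw [hsplit, Matrix.exp_add_of_commute _ _ (Algebra.commute_algebraMap_right _ _)]
  erw [← algebraMap_exp_comm (𝕂 := ℝ) (𝔸 := Matrix ι ι ℝ)]
  rw [← Algebra.commutes, ← Algebra.smul_def, Real.exp_eq_exp_ℝ]

theorem exp_smul_sub_one_mem_colStochastic {P : Matrix ι ι ℝ} (hP : P ∈ colStochastic ℝ ι)
    {s : ℝ} (hs : 0 ≤ s) : exp (s • (P - 1)) ∈ colStochastic ℝ ι := by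
  refine ⟨fun i j => ?_, one_vecMul_exp_smul ?_ s⟩
  · rw [exp_smul_sub_one, smul_apply, smul_eq_mul]
    exact mul_nonneg (Real.exp_pos _).le
      (exp_apply_nonneg (fun i j => mul_nonneg hs (hP.1 i j)) i j)
  · rw [vecMul_sub, hP.2, vecMul_one, sub_self]

theorem exp_smul_sub_one_apply_pos {P : Matrix ι ι ℝ} (hP : ∀ i j, 0 ≤ P i j)
    (hirr : ∀ i j, ∃ k, 0 < (P ^ k) i j) {s : ℝ} (hs : 0 < s) (i j : ι) :
    0 < exp (s • (P - 1)) i j := by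
  obtain ⟨k, hk⟩ := hirr i j
  have hsP : ∀ i j, 0 ≤ (s • P) i j := fun i j => mul_nonneg hs.le (hP i j)
  have hterm : 0 < (k ! : ℝ)⁻¹ * ((s • P) ^ k) i j := by
    rw [smul_pow, smul_apply, smul_eq_mul]; positivity
  rw [exp_smul_sub_one, smul_apply, smul_eq_mul]
  exact mul_pos (Real.exp_pos _)
    (hterm.trans_le (inv_factorial_mul_pow_apply_le_exp_apply hsP k i j))

theorem exists_sum_abs_exp_smul_mulVec_le [Nonempty ι] {A : Matrix ι ι ℝ}
    (hstoch : ∀ t : ℝ, 0 ≤ t → exp (t • A) ∈ colStochastic ℝ ι) (hpos : ∀ i j, 0 < exp A i j) :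
    ∃ c, 0 ≤ c ∧ c < 1 ∧ ∀ w : ι → ℝ, ∑ j, w j = 0 → ∀ t : ℝ, 0 ≤ t →
      ∑ i, |(exp (t • A) *ᵥ w) i| ≤ c ^ ⌊t⌋₊ * ∑ j, |w j| := by
  have hE : exp A ∈ colStochastic ℝ ι := by simpa using hstoch 1 zero_le_one
  obtain ⟨c, hc0, hc1, hc⟩ := exists_sum_abs_mulVec_le hpos (sum_col_of_mem_colStochastic hE)
  have hpow : ∀ m : ℕ, ∀ w : ι → ℝ, ∑ j, w j = 0 →
      ∑ i, |(exp A ^ m *ᵥ w) i| ≤ c ^ m * ∑ j, |w j| := by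
    intro m
    induction m with
    | zero => simp
    | succ m ih =>
      intro w hw
      rw [pow_succ', ← mulVec_mulVec, pow_succ', mul_assoc]
      refine (hc _ ?_).trans (mul_le_mul_of_nonneg_left (ih w hw) hc0)
      rw [sum_mulVec_of_mem_colStochastic (pow_mem hE m), hw]
  refine ⟨c, hc0, hc1, fun w hw t ht => ?_⟩
  have hsplit : exp (t • A) = exp ((t - ⌊t⌋₊) • A) * exp A ^ ⌊t⌋₊ := by
    rw [← exp_nsmul, ← Nat.cast_smul_eq_nsmul ℝ, ← exp_add_of_commute _ _
      (((Commute.refl A).smul_left _).smul_right _), ← add_smul, sub_add_cancel]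
  rw [hsplit, ← mulVec_mulVec]
  refine (sum_abs_mulVec_le (hstoch _ (sub_nonneg.2 (Nat.floor_le ht))) ?_).trans (hpow _ w hw)
  rw [sum_mulVec_of_mem_colStochastic (pow_mem hE _), hw]

theorem tendsto_exp_smul_mulVec_zero [Nonempty ι] {A : Matrix ι ι ℝ}
    (hstoch : ∀ t : ℝ, 0 ≤ t → exp (t • A) ∈ colStochastic ℝ ι) (hpos : ∀ i j, 0 < exp A i j)
    {w : ι → ℝ} (hw : ∑ j, w j = 0) :
    Tendsto (fun t : ℝ => exp (t • A) *ᵥ w) atTop (𝓝 0) := by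
  obtain ⟨c, hc0, hc1, hc⟩ := exists_sum_abs_exp_smul_mulVec_le hstoch hpos
  have hbound : Tendsto (fun t : ℝ => c ^ ⌊t⌋₊ * ∑ j, |w j|) atTop (𝓝 0) := by
    simpa using ((tendsto_pow_atTop_nhds_zero_of_lt_one hc0 hc1).comp
      tendsto_nat_floor_atTop).mul_const (∑ j, |w j|)
  refine tendsto_pi_nhds.2 fun i => squeeze_zero_norm' ?_ hbound
  filter_upwards [eventually_ge_atTop 0] with t ht
  exact (single_le_sum (fun j _ => abs_nonneg ((exp (t • A) *ᵥ w) j)) (mem_univ i)).trans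
    (hc w hw t ht)

end Matrix

theorem stationary_vector_globally_attractive_general
    (n : ℕ) (P : Matrix (Fin n) (Fin n) ℝ)
    (hP0 : ∀ i j, 0 ≤ P i j) (hP1 : ∀ j, ∑ i, P i j = 1)
    (hirr : ∀ i j, ∃ k : ℕ, 1 ≤ k ∧ 0 < (P ^ k) i j)
    (χ : ℝ) (hχ : 0 < χ) (M : ℝ)
    (ρinf : Fin n → ℝ)
    (hρinfP : P.mulVec ρinf = ρinf) (hρinfM : (∑ i, ρinf i) = M)
    (ρ : ℝ → Fin n → ℝ)
    (hode : ∀ i t, HasDerivAt (fun s => ρ s i)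
      (χ * ((∑ j, P i j * ρ t j) - ρ t i)) t)
    (hmass : (∑ i, ρ 0 i) = M) :
    ∀ i, Tendsto (fun t => ρ t i) atTop (nhds (ρinf i)) := by
  set A := χ • (P - 1)
  have hP : P ∈ colStochastic ℝ (Fin n) := mem_colStochastic_iff_sum.2 ⟨hP0, hP1⟩
  have hexpA : ∀ t : ℝ, exp (t • A) = exp ((t * χ) • (P - 1)) := fun t => by rw [smul_smul]
  have hA : ∀ v i, (A *ᵥ v) i = χ * ((∑ j, P i j * v j) - v i) := fun v i => by
    rw [smul_mulVec, sub_mulVec, one_mulVec]; rfl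
  have hρ : ∀ t, HasDerivAt ρ (A *ᵥ ρ t) t := fun t =>
    hasDerivAt_pi.2 fun i => hA (ρ t) i ▸ hode i t
  have hfix : A *ᵥ ρinf = 0 := by
    rw [smul_mulVec, sub_mulVec, one_mulVec, hρinfP, sub_self, smul_zero]
  have hdiff : ∀ t, ρ t - ρinf = exp (t • A) *ᵥ (ρ 0 - ρinf) := fun t => by
    rw [mulVec_sub, ← eq_exp_smul_mulVec_of_hasDerivAt hρ, exp_smul_mulVec_of_mulVec_eq_zero hfix]
  have hw : ∑ j, (ρ 0 - ρinf) j = 0 := by simp [sum_sub_distrib, hmass, hρinfM]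
  intro i
  have : Nonempty (Fin n) := ⟨i⟩
  have hpos : ∀ i j, 0 < exp A i j := fun i j => by
    simpa [A] using exp_smul_sub_one_apply_pos hP0
      (fun i j => (hirr i j).imp fun _ => And.right) hχ i j
  have hlim := tendsto_exp_smul_mulVec_zero
    (fun t ht => hexpA t ▸ exp_smul_sub_one_mem_colStochastic hP (by positivity)) hpos hw
  simp_rw [← hdiff] at hlim
  simpa using tendsto_pi_nhds.1 (hlim.add_const ρinf) i

/-- The unique nonnegative stationary vector of an irreducible left-stochastic
matrix is a globally attractive equilibrium of `ρ' = χ(P − I)ρ` among nonnegative data with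
total mass `M`. -/
theorem stationary_vector_globally_attractive
    (n : ℕ) (hn : 1 ≤ n) (P : Matrix (Fin n) (Fin n) ℝ)
    (hP0 : ∀ i j, 0 ≤ P i j) (hP1 : ∀ j, ∑ i, P i j = 1)
    (hirr : ∀ i j, ∃ k : ℕ, 1 ≤ k ∧ 0 < (P ^ k) i j)
    (χ : ℝ) (hχ : 0 < χ) (M : ℝ) (hM : 0 < M)
    (ρinf : Fin n → ℝ) (hρinf0 : ∀ i, 0 ≤ ρinf i)
    (hρinfP : P.mulVec ρinf = ρinf) (hρinfM : (∑ i, ρinf i) = M)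
    (huniq : ∀ ρ : Fin n → ℝ, (∀ i, 0 ≤ ρ i) → P.mulVec ρ = ρ → (∑ i, ρ i) = M → ρ = ρinf)
    (ρ : ℝ → Fin n → ℝ)
    (hdiff : ∀ i, Differentiable ℝ fun t => ρ t i)
    (hode : ∀ i t, HasDerivAt (fun s => ρ s i)
      (χ * ((∑ j, P i j * ρ t j) - ρ t i)) t)
    (h0 : ∀ i, 0 ≤ ρ 0 i) (hmass : (∑ i, ρ 0 i) = M) :
    ∀ i, Tendsto (fun t => ρ t i) atTop (nhds (ρinf i)) :=
  stationary_vector_globally_attractive_general n P hP0 hP1 hirr χ hχ M ρinf hρinfP hρinfM ρ hode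
    hmass
end

section
/- Let n ≥ 1 and let P be an n×n real left-stochastic irreducible matrix. Then every complex eigenvalue λ of P satisfies |λ| ≤ 1; the number 1 is an eigenvalue of P of algebraic multiplicity one; and every eigenvalue λ ≠ 1 of P satisfies Re λ < 1 (so that all nonzero eigenvalues of P − I have strictly negative real part). -/
/-!
`Pᵀ` has the same spectrum as `P` and is row-stochastic, so its Gershgorin discs lie in the unit
disc, and `Pᵀ 1 = 1` makes `1` an eigenvalue. If `P x = x`, then `|x|` is again fixed by `P`: the
triangle inequality `|x| ≤ P |x|` must be an equality because `P` preserves coordinate sums. By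
irreducibility a nonnegative fixed vector vanishing somewhere vanishes everywhere, so the fixed
space is the line through a positive vector `u`. As `P - 1` maps into the hyperplane of vectors
with sum zero, which misses `u`, there are no generalized eigenvectors for `1` beyond `ℂ u`; hence
the algebraic multiplicity is one. Finally, a point of the closed unit disc with real part `1` is
`1`.
-/

open Finset Matrix Module End

theorem Complex.re_lt_one_of_norm_le_one {z : ℂ} (hz : ‖z‖ ≤ 1) (h1 : z ≠ 1) :
    z.re < 1 := by
  refine (z.re_le_norm.trans hz).lt_of_ne fun hre => h1 ?_
  have him : z.im = 0 := abs_re_eq_norm.1 <|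
    le_antisymm (abs_re_le_norm z) (by rw [hre, abs_one]; exact hz)
  exact Complex.ext (by simp [hre]) (by simp [him])

theorem Module.End.maxGenEigenspace_eq_eigenspace_of_disjoint {R M : Type*} [CommRing R]
    [AddCommGroup M] [Module R M] {f : End R M} {μ : R}
    (h : Disjoint (f.eigenspace μ) (LinearMap.range (f - μ • 1))) :
    f.maxGenEigenspace μ = f.eigenspace μ := by
  refine le_antisymm (fun x hx => ?_) eigenspace_le_maxGenEigenspace
  obtain ⟨k, hk⟩ := (mem_maxGenEigenspace f μ x).1 hx
  clear hx
  rw [eigenspace_def, LinearMap.mem_ker]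
  induction k generalizing x with
  | zero => simp_all
  | succ k ih =>
    have hfx : (f - μ • 1) x ∈ f.eigenspace μ := by
      rw [eigenspace_def, LinearMap.mem_ker]
      exact ih _ (by rwa [← Module.End.mul_apply, ← pow_succ])
    exact Submodule.disjoint_def.1 h _ hfx (LinearMap.mem_range_self _ x)

namespace Matrix

variable {ι : Type*} [Fintype ι]

theorem map_mulVec_comp_of_mulVec_eq_self {R S : Type*} [Semiring R] [Semiring S] (f : R →+* S)
    {A : Matrix ι ι R} {v : ι → R} (h : A *ᵥ v = v) : A.map f *ᵥ (f ∘ v) = f ∘ v := by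
  ext i
  rw [← RingHom.map_mulVec, h]
  rfl

variable [DecidableEq ι]

theorem spectrum_transpose {K : Type*} [Field K] (A : Matrix ι ι K) :
    spectrum K Aᵀ = spectrum K A := by
  ext μ
  simp only [mem_spectrum_iff_isRoot_charpoly, charpoly_transpose]

theorem one_mem_spectrum_of_vecMul_eq_self {K : Type*} [Field K] {A : Matrix ι ι K}
    {x : ι → K} (hx : x ≠ 0) (h : x ᵥ* A = x) : (1 : K) ∈ spectrum K A := by
  rw [← spectrum_transpose, ← spectrum_toLin', ← hasEigenvalue_iff_mem_spectrum]
  exact hasEigenvalue_of_hasEigenvector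
    ⟨mem_eigenspace_iff.2 (by simp [mulVec_transpose, h]), hx⟩

theorem pow_mulVec_of_mulVec_eq_self {R : Type*} [Semiring R] {A : Matrix ι ι R} {v : ι → R}
    (h : A *ᵥ v = v) (k : ℕ) : (A ^ k) *ᵥ v = v := by
  induction k with
  | zero => simp
  | succ k ih => rw [pow_succ', ← mulVec_mulVec, ih, h]

theorem IsIrreducible.pos_of_mulVec_eq_self_s3 {R : Type*} [CommRing R] [LinearOrder R]
    [IsStrictOrderedRing R] {A : Matrix ι ι R} (hA : A.IsIrreducible) {v : ι → R}
    (hv : A *ᵥ v = v) (hv0 : ∀ i, 0 ≤ v i) {j : ι} (hj : 0 < v j) (i : ι) : 0 < v i := by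
  obtain ⟨k, -, hk⟩ := (isIrreducible_iff_exists_pow_pos hA.nonneg).1 hA i j
  rw [← pow_mulVec_of_mulVec_eq_self hv k]
  calc 0 < (A ^ k) i j * v j := mul_pos hk hj
    _ ≤ ∑ l, (A ^ k) i l * v l :=
      single_le_sum (fun l _ => mul_nonneg (pow_apply_nonneg hA.nonneg k i l) (hv0 l))
        (mem_univ j)

section Stochastic

variable {P : Matrix ι ι ℝ}

theorem one_vecMul_map_ofReal (hP : P ∈ colStochastic ℝ ι) :
    1 ᵥ* P.map Complex.ofReal = (1 : ι → ℂ) := by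
  ext j
  simpa [vecMul, dotProduct] using
    congrArg ((↑) : ℝ → ℂ) (sum_col_of_mem_colStochastic hP j)

theorem norm_le_one_of_mem_spectrum_map_ofReal (hP : P ∈ colStochastic ℝ ι) {μ : ℂ}
    (hμ : μ ∈ spectrum ℂ (P.map Complex.ofReal)) : ‖μ‖ ≤ 1 := by
  rw [← spectrum_transpose, ← spectrum_toLin', ← hasEigenvalue_iff_mem_spectrum] at hμ
  obtain ⟨k, hk⟩ := eigenvalue_mem_ball hμ
  have hradius : ∑ j ∈ univ.erase k, ‖(P.map Complex.ofReal)ᵀ k j‖ = 1 - P k k := by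
    rw [eq_sub_iff_add_eq, ← sum_col_of_mem_colStochastic hP k,
      ← sum_erase_add _ _ (mem_univ k)]
    congr 1
    refine sum_congr rfl fun j _ => ?_
    simp [Real.norm_of_nonneg (nonneg_of_mem_colStochastic hP)]
  rw [Metric.mem_closedBall, hradius, transpose_apply, map_apply, dist_eq_norm] at hk
  calc ‖μ‖ ≤ ‖μ - P k k‖ + ‖((P k k : ℝ) : ℂ)‖ := norm_le_norm_sub_add _ _
    _ ≤ (1 - P k k) + P k k := by
      gcongr
      simp [abs_of_nonneg (nonneg_of_mem_colStochastic hP)]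
    _ = 1 := sub_add_cancel 1 _

theorem mulVec_norm_eq_of_mulVec_eq_self (hP : P ∈ colStochastic ℝ ι) {v : ι → ℂ}
    (hv : P.map Complex.ofReal *ᵥ v = v) : P *ᵥ (‖v ·‖) = (‖v ·‖) := by
  have hle : ∀ i, ‖v i‖ ≤ (P *ᵥ (‖v ·‖)) i := fun i => by
    calc ‖v i‖ = ‖∑ j, (P i j : ℂ) * v j‖ := by rw [← congrFun hv i]; rfl
      _ ≤ ∑ j, ‖(P i j : ℂ) * v j‖ := norm_sum_le _ _
      _ = (P *ᵥ (‖v ·‖)) i := by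
        refine sum_congr rfl fun j _ => ?_
        rw [norm_mul, Complex.norm_real, Real.norm_of_nonneg (nonneg_of_mem_colStochastic hP)]
  have hsum := (sum_eq_sum_iff_of_le fun i (_ : i ∈ univ) => hle i).1
    (sum_mulVec_of_mem_colStochastic hP).symm
  exact funext fun i => (hsum i (mem_univ i)).symm

theorem one_mem_spectrum_map_ofReal [Nonempty ι] (hP : P ∈ colStochastic ℝ ι) :
    (1 : ℂ) ∈ spectrum ℂ (P.map Complex.ofReal) :=
  one_mem_spectrum_of_vecMul_eq_self one_ne_zero (one_vecMul_map_ofReal hP)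

variable (hP : P ∈ colStochastic ℝ ι) (hirr : P.IsIrreducible)
include hP hirr

theorem exists_pos_mulVec_eq_self [Nonempty ι] :
    ∃ u : ι → ℝ, P *ᵥ u = u ∧ ∀ i, 0 < u i := by
  have h1 : HasEigenvalue (toLin' (P.map Complex.ofReal)) 1 := by
    rw [hasEigenvalue_iff_mem_spectrum, spectrum_toLin']
    exact one_mem_spectrum_map_ofReal hP
  obtain ⟨v, hv, hv0⟩ := h1.exists_hasEigenvector
  obtain ⟨j, hj⟩ := Function.ne_iff.1 hv0
  have hfix : P.map Complex.ofReal *ᵥ v = v := by simpa using mem_eigenspace_iff.1 hv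
  exact ⟨(‖v ·‖), mulVec_norm_eq_of_mulVec_eq_self hP hfix,
    hirr.pos_of_mulVec_eq_self_s3 (mulVec_norm_eq_of_mulVec_eq_self hP hfix)
      (fun i => norm_nonneg _) (norm_pos_iff.2 hj)⟩

theorem eq_smul_of_mulVec_eq_self {u : ι → ℝ} (hu : P *ᵥ u = u) (hu0 : ∀ i, 0 < u i)
    {x : ι → ℂ} (hx : P.map Complex.ofReal *ᵥ x = x) (i : ι) :
    x = (x i / u i) • ((↑) ∘ u : ι → ℂ) := by
  set d := x - (x i / u i) • ((↑) ∘ u : ι → ℂ)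
  have hw : P.map Complex.ofReal *ᵥ ((↑) ∘ u) = ((↑) ∘ u : ι → ℂ) :=
    map_mulVec_comp_of_mulVec_eq_self Complex.ofRealHom hu
  have hd : P.map Complex.ofReal *ᵥ d = d := by
    rw [mulVec_sub, mulVec_smul, hx, hw]
  have hdi : d i = 0 := by
    simp [d, div_mul_cancel₀ _ (Complex.ofReal_ne_zero.2 (hu0 i).ne')]
  suffices d = 0 from sub_eq_zero.1 this
  by_contra hne
  obtain ⟨j, hj⟩ := Function.ne_iff.1 hne
  have := hirr.pos_of_mulVec_eq_self_s3 (mulVec_norm_eq_of_mulVec_eq_self hP hd)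
    (fun i => norm_nonneg _) (norm_pos_iff.2 hj) i
  simp [hdi] at this

theorem rootMultiplicity_one_charpoly_map_ofReal [Nonempty ι] :
    (P.map Complex.ofReal).charpoly.rootMultiplicity 1 = 1 := by
  obtain ⟨u, hu, hu0⟩ := exists_pos_mulVec_eq_self hP hirr
  set f := toLin' (P.map Complex.ofReal)
  set w : ι → ℂ := (↑) ∘ u
  have hw : P.map Complex.ofReal *ᵥ w = w :=
    map_mulVec_comp_of_mulVec_eq_self Complex.ofRealHom hu
  have hw_sum : 1 ⬝ᵥ w ≠ 0 := by
    have : 0 < ∑ i, u i := sum_pos (fun i _ => hu0 i) univ_nonempty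
    simpa [w, one_dotProduct] using Complex.ofReal_ne_zero.2 this.ne'
  have heig : eigenspace f 1 = ℂ ∙ w := by
    ext x
    rw [mem_eigenspace_iff, one_smul, Submodule.mem_span_singleton, toLin'_apply]
    constructor
    · intro hx
      exact ⟨_, (eq_smul_of_mulVec_eq_self hP hirr hu hu0 hx (Classical.arbitrary ι)).symm⟩
    · rintro ⟨c, rfl⟩
      rw [mulVec_smul, hw]
  have hdisj : Disjoint (eigenspace f 1) (LinearMap.range (f - (1 : ℂ) • 1)) := by
    rw [heig, Submodule.disjoint_def]
    rintro _ hy ⟨x, rfl⟩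
    obtain ⟨c, hc⟩ := Submodule.mem_span_singleton.1 hy
    have hsum : 1 ⬝ᵥ (f - (1 : ℂ) • 1) x = 0 := by
      rw [one_smul, LinearMap.sub_apply, toLin'_apply, dotProduct_sub, dotProduct_mulVec,
        one_vecMul_map_ofReal hP, Module.End.one_apply, sub_self]
    rw [← hc, dotProduct_smul, smul_eq_mul, mul_eq_zero] at hsum
    rw [← hc, hsum.resolve_right hw_sum, zero_smul]
  have hw0 : w ≠ 0 := fun h => hw_sum (by rw [h, dotProduct_zero])
  rw [← charpoly_toLin', ← LinearMap.finrank_maxGenEigenspace_eq,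
    maxGenEigenspace_eq_eigenspace_of_disjoint hdisj, heig, finrank_span_singleton hw0]

end Stochastic

end Matrix

/-- Spectral properties of an irreducible left-stochastic matrix: all complex
eigenvalues have modulus at most 1, the eigenvalue 1 has algebraic multiplicity one, and
every eigenvalue different from 1 has real part strictly less than 1. -/
theorem stochastic_irreducible_spectrum
    (n : ℕ) (hn : 1 ≤ n) (P : Matrix (Fin n) (Fin n) ℝ)
    (hP0 : ∀ i j, 0 ≤ P i j) (hP1 : ∀ j, ∑ i, P i j = 1)
    (hirr : ∀ i j, ∃ k : ℕ, 1 ≤ k ∧ 0 < (P ^ k) i j) :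
    (∀ lam ∈ spectrum ℂ (P.map fun x => (x : ℂ)), ‖lam‖ ≤ 1) ∧
    ((1 : ℂ) ∈ spectrum ℂ (P.map fun x => (x : ℂ))) ∧
    (Matrix.charpoly (P.map fun x => (x : ℂ))).rootMultiplicity 1 = 1 ∧
    (∀ lam ∈ spectrum ℂ (P.map fun x => (x : ℂ)), lam ≠ 1 → lam.re < 1) := by
  have : Nonempty (Fin n) := ⟨⟨0, hn⟩⟩
  have hP : P ∈ colStochastic ℝ (Fin n) := mem_colStochastic_iff_sum.2 ⟨hP0, hP1⟩
  have hP_irr : P.IsIrreducible := (isIrreducible_iff_exists_pow_pos hP0).2 hirr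
  have hnorm : ∀ lam ∈ spectrum ℂ (P.map Complex.ofReal), ‖lam‖ ≤ 1 :=
    fun _ => norm_le_one_of_mem_spectrum_map_ofReal hP
  exact ⟨hnorm, one_mem_spectrum_map_ofReal hP,
    rootMultiplicity_one_charpoly_map_ofReal hP hP_irr,
    fun lam hlam => Complex.re_lt_one_of_norm_le_one (hnorm lam hlam)⟩
end

section
/- Let n ≥ 1, let ρ^∞ ∈ ℝ^n have strictly positive entries, set c := min_i ρ^∞_i > 0, and let μ > 0 and ν₁ > ν₂ be real numbers. Suppose m : ℝ → ℝ^n is differentiable, m_i(t) ≥ 0 for all i and all t ≥ 0, and d/dt ∑_i ρ^∞_i m_i(t) = μ(ν₂ − ν₁) ∑_i (ρ^∞_i)² m_i(t) for all t ≥ 0. Then ∑_i ρ^∞_i m_i(t) ≤ e^{−cμ(ν₁−ν₂)t} ∑_i ρ^∞_i m_i(0) for all t ≥ 0, and consequently m_i(t) → 0 as t → +∞ for every i. -/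
/-!
The weighted load `f t = ∑ ρ^∞_i m_i t` satisfies `f' ≤ -cμ(ν₁ - ν₂) f` on `[0, ∞)`, because
`c ρ^∞_i ≤ (ρ^∞_i)²` and the `m_i` are nonnegative; Grönwall's inequality gives the exponential
decay. Since every `ρ^∞_i` is positive and every `m_i` nonnegative, `ρ^∞_i m_i ≤ f`, so each
`m_i` is squeezed to `0`.
-/

open Finset Filter Topology

theorem le_mul_exp_of_hasDerivAt_le_mul {f f' : ℝ → ℝ} {K a : ℝ}
    (hf : ∀ t, a ≤ t → HasDerivAt f (f' t) t) (bound : ∀ t, a ≤ t → f' t ≤ K * f t)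
    {t : ℝ} (ht : a ≤ t) : f t ≤ f a * Real.exp (K * (t - a)) := by
  have hcont : ContinuousOn f (Set.Icc a t) := fun s hs =>
    (hf s hs.1).continuousAt.continuousWithinAt
  have := le_gronwallBound_of_liminf_deriv_right_le (ε := 0) hcont
    (fun s hs _ hr => (hf s hs.1).hasDerivWithinAt.liminf_right_slope_le hr) le_rfl
    (fun s hs => by simpa using bound s hs.1) t ⟨ht, le_rfl⟩
  rwa [gronwallBound_ε0] at this

theorem mul_sum_mul_le_sum_sq_mul {ι : Type*} (s : Finset ι) {w x : ι → ℝ} {c : ℝ}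
    (hc : ∀ i ∈ s, c ≤ w i) (hw : ∀ i ∈ s, 0 ≤ w i) (hx : ∀ i ∈ s, 0 ≤ x i) :
    c * ∑ i ∈ s, w i * x i ≤ ∑ i ∈ s, w i ^ 2 * x i := by
  rw [mul_sum]
  refine sum_le_sum fun i hi => ?_
  calc c * (w i * x i) ≤ w i * (w i * x i) :=
        mul_le_mul_of_nonneg_right (hc i hi) (mul_nonneg (hw i hi) (hx i hi))
    _ = w i ^ 2 * x i := by ring

theorem tendsto_nhds_zero_of_sum_mul_tendsto_nhds_zero {ι α : Type*} [Fintype ι] {l : Filter α}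
    {w : ι → ℝ} (hw : ∀ i, 0 < w i) {x : α → ι → ℝ} (hx : ∀ᶠ a in l, ∀ i, 0 ≤ x a i)
    (hsum : Tendsto (fun a => ∑ i, w i * x a i) l (𝓝 0)) (i : ι) :
    Tendsto (fun a => x a i) l (𝓝 0) := by
  have hle : ∀ᶠ a in l, x a i ≤ (w i)⁻¹ * ∑ j, w j * x a j := hx.mono fun a ha => by
    rw [le_inv_mul_iff₀ (hw i)]
    exact single_le_sum (f := fun j => w j * x a j)
      (fun j _ => mul_nonneg (hw j).le (ha j)) (mem_univ i)
  exact squeeze_zero' (hx.mono fun a ha => ha i) hle (by simpa using hsum.const_mul (w i)⁻¹)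

theorem tendsto_exp_neg_mul_atTop_nhds_zero {K : ℝ} (hK : 0 < K) :
    Tendsto (fun t => Real.exp (-K * t)) atTop (𝓝 0) :=
  Real.tendsto_exp_atBot.comp (tendsto_id.const_mul_atTop_of_neg (neg_neg_of_pos hK))

theorem infection_eradication_nu1_gt_nu2_general
    (n : ℕ) (ρinf : Fin n → ℝ) (hρinf : ∀ i, 0 < ρinf i)
    (c : ℝ) (hc : IsLeast (Set.range ρinf) c)
    (μ ν₁ ν₂ : ℝ) (hμ : 0 < μ) (hν : ν₂ < ν₁)
    (m : ℝ → Fin n → ℝ)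
    (hm0 : ∀ i, ∀ t : ℝ, 0 ≤ t → 0 ≤ m t i)
    (hode : ∀ t : ℝ, 0 ≤ t → HasDerivAt (fun s => ∑ i, ρinf i * m s i)
      (μ * (ν₂ - ν₁) * ∑ i, (ρinf i) ^ 2 * m t i) t) :
    (∀ t : ℝ, 0 ≤ t →
      ∑ i, ρinf i * m t i ≤ Real.exp (-(c * μ * (ν₁ - ν₂)) * t) * ∑ i, ρinf i * m 0 i) ∧
    (∀ i, Tendsto (fun t => m t i) atTop (nhds 0)) := by
  have hc_pos : 0 < c := by
    obtain ⟨i₀, rfl⟩ := hc.1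
    exact hρinf i₀
  have hspeed : 0 < μ * (ν₁ - ν₂) := mul_pos hμ (sub_pos.mpr hν)
  have hrate : 0 < c * μ * (ν₁ - ν₂) := by rw [mul_assoc]; exact mul_pos hc_pos hspeed
  have hderiv_le : ∀ s : ℝ, 0 ≤ s → μ * (ν₂ - ν₁) * ∑ i, (ρinf i) ^ 2 * m s i ≤
      -(c * μ * (ν₁ - ν₂)) * ∑ i, ρinf i * m s i := fun s hs => by
    have := mul_sum_mul_le_sum_sq_mul univ (c := c) (x := m s)
      (fun i _ => hc.2 ⟨i, rfl⟩) (fun i _ => (hρinf i).le) (fun i _ => hm0 i s hs)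
    linarith [mul_le_mul_of_nonneg_left this hspeed.le]
  have hdecay : ∀ t : ℝ, 0 ≤ t →
      ∑ i, ρinf i * m t i ≤ Real.exp (-(c * μ * (ν₁ - ν₂)) * t) * ∑ i, ρinf i * m 0 i :=
    fun t ht => by simpa [mul_comm] using le_mul_exp_of_hasDerivAt_le_mul hode hderiv_le ht
  refine ⟨hdecay, tendsto_nhds_zero_of_sum_mul_tendsto_nhds_zero hρinf
    (eventually_ge_atTop 0 |>.mono fun t ht i => hm0 i t ht) ?_⟩
  refine squeeze_zero' (eventually_ge_atTop 0 |>.mono fun t ht => ?_)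
    (eventually_ge_atTop 0 |>.mono hdecay) ?_
  · exact sum_nonneg fun i _ => mul_nonneg (hρinf i).le (hm0 i t ht)
  · simpa using (tendsto_exp_neg_mul_atTop_nhds_zero hrate).mul_const (∑ i, ρinf i * m 0 i)

/-- If `ν₁ > ν₂`, the linearised total weighted viral load
`∑_i ρ^∞_i m_i` decays exponentially (rate at least `cμ(ν₁−ν₂)` with
`c = min_i ρ^∞_i`) and every mean viral load `m_i` tends to 0: the disease-free
state is locally asymptotically stable. -/
theorem infection_eradication_nu1_gt_nu2
    (n : ℕ) (hn : 1 ≤ n) (ρinf : Fin n → ℝ) (hρinf : ∀ i, 0 < ρinf i)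
    (c : ℝ) (hc : IsLeast (Set.range ρinf) c)
    (μ ν₁ ν₂ : ℝ) (hμ : 0 < μ) (hν : ν₂ < ν₁)
    (m : ℝ → Fin n → ℝ)
    (hmdiff : ∀ i, Differentiable ℝ fun t => m t i)
    (hm0 : ∀ i, ∀ t : ℝ, 0 ≤ t → 0 ≤ m t i)
    (hode : ∀ t : ℝ, 0 ≤ t → HasDerivAt (fun s => ∑ i, ρinf i * m s i)
      (μ * (ν₂ - ν₁) * ∑ i, (ρinf i) ^ 2 * m t i) t) :
    (∀ t : ℝ, 0 ≤ t →
      ∑ i, ρinf i * m t i ≤ Real.exp (-(c * μ * (ν₁ - ν₂)) * t) * ∑ i, ρinf i * m 0 i) ∧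
    (∀ i, Tendsto (fun t => m t i) atTop (nhds 0)) :=
  infection_eradication_nu1_gt_nu2_general n ρinf hρinf c hc μ ν₁ ν₂ hμ hν m hm0 hode
end

section
/- Let n ≥ 1, let ρ^∞ ∈ ℝ^n have strictly positive entries, set c := min_i ρ^∞_i > 0, and let μ > 0 and ν₂ > ν₁ be real numbers. Suppose m : ℝ → ℝ^n is differentiable, m_i(t) ≥ 0 for all i and all t ≥ 0, ∑_i ρ^∞_i m_i(0) > 0, and d/dt ∑_i ρ^∞_i m_i(t) = μ(ν₂ − ν₁) ∑_i (ρ^∞_i)² m_i(t) for all t ≥ 0. Then ∑_i ρ^∞_i m_i(t) ≥ e^{cμ(ν₂−ν₁)t} ∑_i ρ^∞_i m_i(0) for all t ≥ 0, and consequently ∑_i ρ^∞_i m_i(t) → +∞ as t → +∞. -/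
open Finset Filter

/-! Since every weight `ρ^∞_i` is at least `c`, the right-hand side of the linearised equation is
at least `cμ(ν₂ − ν₁)` times the load itself, so `t ↦ e^{-cμ(ν₂−ν₁)t} ∑_i ρ^∞_i m_i(t)` is
nondecreasing on `[0, ∞)`. A positive initial load then grows exponentially. -/

lemma mul_sum_le_sum_sq_mul {ι : Type*} (s : Finset ι) {ρ x : ι → ℝ} {c : ℝ}
    (hc : ∀ i ∈ s, c ≤ ρ i) (hρ : ∀ i ∈ s, 0 ≤ ρ i) (hx : ∀ i ∈ s, 0 ≤ x i) :
    c * ∑ i ∈ s, ρ i * x i ≤ ∑ i ∈ s, ρ i ^ 2 * x i := by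
  rw [mul_sum]
  refine sum_le_sum fun i hi => ?_
  calc c * (ρ i * x i) = ρ i * (c * x i) := by ring
    _ ≤ ρ i * (ρ i * x i) := by gcongr; exacts [hρ i hi, hx i hi, hc i hi]
    _ = ρ i ^ 2 * x i := by ring

lemma monotoneOn_exp_neg_mul_of_le_deriv {F F' : ℝ → ℝ} {k : ℝ}
    (hF : ∀ t, 0 ≤ t → HasDerivAt F (F' t) t) (hle : ∀ t, 0 ≤ t → k * F t ≤ F' t) :
    MonotoneOn (fun t => Real.exp (-k * t) * F t) (Set.Ici 0) := by
  have hderiv : ∀ t ∈ Set.Ici (0 : ℝ), HasDerivAt (fun t => Real.exp (-k * t) * F t)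
      (Real.exp (-k * t) * (F' t - k * F t)) t := by
    intro t ht
    have hexp : HasDerivAt (fun s => Real.exp (-k * s)) (Real.exp (-k * t) * (-k * 1)) t :=
      ((hasDerivAt_id' t).const_mul (-k)).exp
    exact (hexp.mul (hF t ht)).congr_deriv (by ring)
  refine monotoneOn_of_hasDerivWithinAt_nonneg
    (f' := fun t => Real.exp (-k * t) * (F' t - k * F t)) (convex_Ici 0)
    (HasDerivAt.continuousOn hderiv) (fun t ht => ?_) fun t ht => ?_
  · rw [interior_Ici] at ht
    exact (hderiv t (Set.mem_Ici.2 ht.le)).hasDerivWithinAt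
  · rw [interior_Ici] at ht
    exact mul_nonneg (Real.exp_nonneg _) (sub_nonneg.2 (hle t ht.le))

lemma exp_mul_le_of_le_deriv {F F' : ℝ → ℝ} {k : ℝ}
    (hF : ∀ t, 0 ≤ t → HasDerivAt F (F' t) t) (hle : ∀ t, 0 ≤ t → k * F t ≤ F' t)
    {t : ℝ} (ht : 0 ≤ t) : Real.exp (k * t) * F 0 ≤ F t := by
  have hmono := monotoneOn_exp_neg_mul_of_le_deriv hF hle Set.self_mem_Ici ht ht
  simp only [mul_zero, Real.exp_zero, one_mul] at hmono
  calc Real.exp (k * t) * F 0 ≤ Real.exp (k * t) * (Real.exp (-k * t) * F t) := by gcongr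
    _ = F t := by rw [← mul_assoc, ← Real.exp_add]; simp

lemma tendsto_atTop_of_exp_mul_le {F : ℝ → ℝ} {k a : ℝ} (hk : 0 < k) (ha : 0 < a)
    (hF : ∀ t, 0 ≤ t → Real.exp (k * t) * a ≤ F t) : Tendsto F atTop atTop := by
  refine tendsto_atTop_mono' _ ?_ <| Tendsto.atTop_mul_const ha <|
    Real.tendsto_exp_atTop.comp (tendsto_id.const_mul_atTop hk)
  filter_upwards [eventually_ge_atTop 0] with t ht
  exact hF t ht

theorem infection_blowup_nu2_gt_nu1_general
    (n : ℕ) (ρinf : Fin n → ℝ) (hρinf : ∀ i, 0 < ρinf i)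
    (c : ℝ) (hc : IsLeast (Set.range ρinf) c)
    (μ ν₁ ν₂ : ℝ) (hμ : 0 < μ) (hν : ν₁ < ν₂)
    (m : ℝ → Fin n → ℝ)
    (hm0 : ∀ i, ∀ t : ℝ, 0 ≤ t → 0 ≤ m t i)
    (hinit : 0 < ∑ i, ρinf i * m 0 i)
    (hode : ∀ t : ℝ, 0 ≤ t → HasDerivAt (fun s => ∑ i, ρinf i * m s i)
      (μ * (ν₂ - ν₁) * ∑ i, (ρinf i) ^ 2 * m t i) t) :
    (∀ t : ℝ, 0 ≤ t →
      Real.exp (c * μ * (ν₂ - ν₁) * t) * ∑ i, ρinf i * m 0 i ≤ ∑ i, ρinf i * m t i) ∧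
    Tendsto (fun t => ∑ i, ρinf i * m t i) atTop atTop := by
  obtain ⟨⟨j, rfl⟩, hmin⟩ := hc
  have hgap : 0 < ν₂ - ν₁ := sub_pos.2 hν
  have hrate : 0 < ρinf j * μ * (ν₂ - ν₁) := by have := hρinf j; positivity
  have hgrowth : ∀ t, 0 ≤ t → ρinf j * μ * (ν₂ - ν₁) * ∑ i, ρinf i * m t i ≤
      μ * (ν₂ - ν₁) * ∑ i, ρinf i ^ 2 * m t i := fun t ht =>
    calc _ = μ * (ν₂ - ν₁) * (ρinf j * ∑ i, ρinf i * m t i) := by ring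
      _ ≤ _ := by
        gcongr
        exact mul_sum_le_sum_sq_mul _ (fun i _ => hmin ⟨i, rfl⟩) (fun i _ => (hρinf i).le)
          fun i _ => hm0 i t ht
  have hlower := fun t (ht : 0 ≤ t) => exp_mul_le_of_le_deriv hode hgrowth ht
  exact ⟨hlower, tendsto_atTop_of_exp_mul_le hrate hinit hlower⟩

/-- If `ν₂ > ν₁`, the linearised total weighted viral load
`∑_i ρ^∞_i m_i` grows at least exponentially (rate at least `cμ(ν₂−ν₁)` with
`c = min_i ρ^∞_i`) and blows up: the disease-free state is unstable. -/
theorem infection_blowup_nu2_gt_nu1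
    (n : ℕ) (hn : 1 ≤ n) (ρinf : Fin n → ℝ) (hρinf : ∀ i, 0 < ρinf i)
    (c : ℝ) (hc : IsLeast (Set.range ρinf) c)
    (μ ν₁ ν₂ : ℝ) (hμ : 0 < μ) (hν : ν₁ < ν₂)
    (m : ℝ → Fin n → ℝ)
    (hmdiff : ∀ i, Differentiable ℝ fun t => m t i)
    (hm0 : ∀ i, ∀ t : ℝ, 0 ≤ t → 0 ≤ m t i)
    (hinit : 0 < ∑ i, ρinf i * m 0 i)
    (hode : ∀ t : ℝ, 0 ≤ t → HasDerivAt (fun s => ∑ i, ρinf i * m s i)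
      (μ * (ν₂ - ν₁) * ∑ i, (ρinf i) ^ 2 * m t i) t) :
    (∀ t : ℝ, 0 ≤ t →
      Real.exp (c * μ * (ν₂ - ν₁) * t) * ∑ i, ρinf i * m 0 i ≤ ∑ i, ρinf i * m t i) ∧
    Tendsto (fun t => ∑ i, ρinf i * m t i) atTop atTop :=
  infection_blowup_nu2_gt_nu1_general n ρinf hρinf c hc μ ν₁ ν₂ hμ hν m hm0 hinit hode
end

section
/- Let n ≥ 1, χ > 0, fix an index i, and for every index j let p_{ij}, p_{ji} ≥ 0 with p_{ij} + p_{ji} > 0, and let u_j, w_j : ℝ → ℝ be differentiable with u_j'(t) = χ(p_{ij} w_j(t) − p_{ji} u_j(t)) and w_j'(t) = χ(p_{ji} u_j(t) − p_{ij} w_j(t)) for all t. Set ρ̄_j := u_j(0) + w_j(0). Then the total density ρ_i(t) := ∑_j u_j(t) converges as t → +∞ to ρ^∞_i = ∑_j (p_{ij}/(p_{ji} + p_{ij})) ρ̄_j. -/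
/-!
Each commuter pair `{i, j}` evolves independently. Its mass `u_j + w_j` is conserved, so
`u_j' = χ (p_{ij} + p_{ji}) (L_j - u_j)` with `L_j = p_{ij} ρ̄_j / (p_{ji} + p_{ij})`; hence
`u_j(t) - L_j` decays like `exp (-χ (p_{ij} + p_{ji}) t)`, and the limit of `ρ_i = ∑_j u_j` is
`∑_j L_j`.
-/

open Filter Real Topology

theorem add_eq_add_of_hasDerivAt_neg {u w f : ℝ → ℝ}
    (hu : ∀ t, HasDerivAt u (f t) t) (hw : ∀ t, HasDerivAt w (-f t) t) (t : ℝ) :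
    u t + w t = u 0 + w 0 := by
  have hsum : ∀ t, HasDerivAt (fun t => u t + w t) 0 t := fun t =>
    ((hu t).add (hw t)).congr_deriv (add_neg_cancel _)
  exact is_const_of_deriv_eq_zero (fun t => (hsum t).differentiableAt)
    (fun t => (hsum t).deriv) t 0

section Relaxation

variable {u : ℝ → ℝ} {k L : ℝ}

theorem eq_add_mul_exp_of_hasDerivAt_relaxation (hu : ∀ t, HasDerivAt u (k * (L - u t)) t)
    (t : ℝ) : u t = L + (u 0 - L) * exp (-(k * t)) := by
  -- `(u - L) e^{kt}` has derivative `e^{kt} (u' - k (L - u)) = 0`.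
  have hconst : ∀ t, HasDerivAt (fun t => (u t - L) * exp (k * t)) 0 t := fun t =>
    (((hu t).sub_const L).mul ((hasDerivAt_const_mul k).exp)).congr_deriv (by ring)
  have h := is_const_of_deriv_eq_zero (fun t => (hconst t).differentiableAt)
    (fun t => (hconst t).deriv) t 0
  simp only [mul_zero, exp_zero, mul_one] at h
  rw [exp_neg, ← h, mul_comm k t, mul_inv_cancel_right₀ (exp_ne_zero _)]
  ring

theorem tendsto_of_hasDerivAt_relaxation (hk : 0 < k)
    (hu : ∀ t, HasDerivAt u (k * (L - u t)) t) : Tendsto u atTop (𝓝 L) := by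
  have hexp : Tendsto (fun t => exp (-(k * t))) atTop (𝓝 0) :=
    tendsto_exp_atBot.comp (tendsto_neg_atTop_atBot.comp (tendsto_id.const_mul_atTop hk))
  have hlim := (hexp.const_mul (u 0 - L)).const_add L
  rw [mul_zero, add_zero] at hlim
  exact hlim.congr fun t => (eq_add_mul_exp_of_hasDerivAt_relaxation hu t).symm

end Relaxation

theorem tendsto_commuter_density {χ p q : ℝ} (hχ : 0 < χ) (hpq : 0 < p + q) {u w : ℝ → ℝ}
    (hu : ∀ t, HasDerivAt u (χ * (p * w t - q * u t)) t)
    (hw : ∀ t, HasDerivAt w (χ * (q * u t - p * w t)) t) :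
    Tendsto u atTop (𝓝 (p / (q + p) * (u 0 + w 0))) := by
  have hmass := add_eq_add_of_hasDerivAt_neg hu fun t => (hw t).congr_deriv (by ring)
  refine tendsto_of_hasDerivAt_relaxation (mul_pos hχ hpq) fun t => (hu t).congr_deriv ?_
  have hne : q + p ≠ 0 := by linarith
  rw [show w t = u 0 + w 0 - u t by linarith [hmass t]]
  field_simp
  ring

theorem commuter_total_density_limit_general
    (n : ℕ) (χ : ℝ) (hχ : 0 < χ)
    (p q : Fin n → ℝ)
    (hpq : ∀ j, 0 < p j + q j)
    (u w : Fin n → ℝ → ℝ)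
    (hu : ∀ j t, HasDerivAt (u j) (χ * (p j * w j t - q j * u j t)) t)
    (hw : ∀ j t, HasDerivAt (w j) (χ * (q j * u j t - p j * w j t)) t) :
    Tendsto (fun t => ∑ j, u j t) atTop
      (nhds (∑ j, (p j / (q j + p j)) * (u j 0 + w j 0))) :=
  tendsto_finsetSum _ fun j _ => tendsto_commuter_density hχ (hpq j) (hu j) (hw j)

/-- The total density `ρ_i(t) = ∑_j ρ_{ji}(t)` of individuals in vertex `i`
in the commuter model converges to `ρ^∞_i = ∑_j p_{ij} ρ̄_{{i,j}}/(p_{ji}+p_{ij})`.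
Here `u j t = ρ_{ji}(t)`, `w j t = ρ_{ij}(t)`, `p j = p_{ij}`, `q j = p_{ji}`. -/
theorem commuter_total_density_limit
    (n : ℕ) (hn : 1 ≤ n) (χ : ℝ) (hχ : 0 < χ)
    (p q : Fin n → ℝ) (hp : ∀ j, 0 ≤ p j) (hq : ∀ j, 0 ≤ q j)
    (hpq : ∀ j, 0 < p j + q j)
    (u w : Fin n → ℝ → ℝ)
    (hu : ∀ j t, HasDerivAt (u j) (χ * (p j * w j t - q j * u j t)) t)
    (hw : ∀ j t, HasDerivAt (w j) (χ * (q j * u j t - p j * w j t)) t) :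
    Tendsto (fun t => ∑ j, u j t) atTop
      (nhds (∑ j, (p j / (q j + p j)) * (u j 0 + w j 0))) :=
  commuter_total_density_limit_general n χ hχ p q hpq u w hu hw
end
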